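/- arXiv:2104.01368 — 6 statements merged into one kernel-verified Lean document; each statement's English description precedes it below -/
import Mathlib

section
/- There exists exactly one row vector π ∈ ℝ^X such that πP = π (i.e. ∑_x π(x)P(x,y) = π(y) for all y), π(x) > 0 for every x ∈ X, and ∑_{x∈X} π(x) = 1. -/
open Matrix Finset

section Aux

variable {X : Type*} [Fintype X] [DecidableEq X] (P : Matrix X X ℝ)

lemma pow_entry_nonneg (hnonneg : ∀ x y, 0 ≤ P x y) :
    ∀ (n : ℕ) (x y : X), 0 ≤ (P ^ n) x y := by
  intro n
  induction n with
  | zero =>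
    intro x y
    simp only [pow_zero, Matrix.one_apply]
    split_ifs <;> norm_num
  | succ n ih =>
    intro x y
    rw [pow_succ, Matrix.mul_apply]
    exact Finset.sum_nonneg fun z _ => mul_nonneg (ih x z) (hnonneg z y)

lemma stationary_pow {π : X → ℝ} (hπ : ∀ y, ∑ x, π x * P x y = π y) :
    ∀ (n : ℕ) (y : X), ∑ x, π x * (P ^ n) x y = π y := by
  intro n
  induction n with
  | zero =>
    intro y
    simp [Matrix.one_apply, mul_ite, Finset.sum_ite_eq']
  | succ n ih =>
    intro y
    calc ∑ x, π x * (P ^ (n + 1)) x y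
        = ∑ z, (∑ x, π x * (P ^ n) x z) * P z y := by
          simp_rw [pow_succ, Matrix.mul_apply, Finset.mul_sum, Finset.sum_mul]
          rw [Finset.sum_comm]
          simp_rw [mul_assoc]
      _ = π y := by simp_rw [ih]; exact hπ y

lemma abs_stationary {π : X → ℝ} (hnonneg : ∀ x y, 0 ≤ P x y)
    (hrow : ∀ x, ∑ y, P x y = 1)
    (hπ : ∀ y, ∑ x, π x * P x y = π y) :
    ∀ y, ∑ x, |π x| * P x y = |π y| := by
  have hge : ∀ y, |π y| ≤ ∑ x, |π x| * P x y := by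
    intro y
    calc |π y| = |∑ x, π x * P x y| := by rw [hπ y]
      _ ≤ ∑ x, |π x * P x y| := Finset.abs_sum_le_sum_abs _ _
      _ = ∑ x, |π x| * P x y := by
          refine Finset.sum_congr rfl fun x _ => ?_
          rw [abs_mul, abs_of_nonneg (hnonneg x y)]
  have hsum : ∑ y, (∑ x, |π x| * P x y - |π y|) = 0 := by
    rw [Finset.sum_sub_distrib, Finset.sum_comm]
    simp_rw [← Finset.mul_sum, hrow, mul_one]
    ring
  intro y
  have h0 := (Finset.sum_eq_zero_iff_of_nonneg
    (fun y _ => sub_nonneg.2 (hge y))).1 hsum y (Finset.mem_univ y)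
  linarith

lemma stationary_pos {π : X → ℝ} (hnonneg : ∀ x y, 0 ≤ P x y)
    (hirr : ∀ x y, ∃ n, 1 ≤ n ∧ 0 < (P ^ n) x y)
    (hπ : ∀ y, ∑ x, π x * P x y = π y) (hnn : ∀ x, 0 ≤ π x)
    {x0 : X} (hx0 : 0 < π x0) : ∀ y, 0 < π y := by
  intro y
  obtain ⟨n, -, hn⟩ := hirr x0 y
  have hstat := stationary_pow P hπ n y
  have h1 : π x0 * (P ^ n) x0 y ≤ ∑ x, π x * (P ^ n) x y :=
    Finset.single_le_sum
      (fun x _ => mul_nonneg (hnn x) (pow_entry_nonneg P hnonneg n x y))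
      (Finset.mem_univ x0)
  have h2 : 0 < π x0 * (P ^ n) x0 y := mul_pos hx0 hn
  linarith

end Aux

/-- A finite irreducible stochastic matrix has exactly one stationary
probability distribution: a row vector `π` with `πP = π`, `π > 0` and `∑ π = 1`. -/
theorem stationary_distribution_exists_unique {X : Type*} [Fintype X] [DecidableEq X]
    (P : Matrix X X ℝ)
    (hcard : 1 < Fintype.card X)
    (hnonneg : ∀ x y, 0 ≤ P x y)
    (hrow : ∀ x, ∑ y, P x y = 1)
    (hirr : ∀ x y, ∃ n, 1 ≤ n ∧ 0 < (P ^ n) x y) :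
    ∃! π : X → ℝ,
      (∀ y, ∑ x, π x * P x y = π y) ∧ (∀ x, 0 < π x) ∧ (∑ x, π x = 1) := by
  have hne : Nonempty X := Fintype.card_pos_iff.mp (by omega)
  obtain ⟨x⟩ := hne
  -- det (P - 1) = 0 since (P - 1) kills the all-ones vector
  have hones : (P - 1) *ᵥ (fun _ => (1 : ℝ)) = 0 := by
    funext z
    simp only [Matrix.mulVec, dotProduct, Matrix.sub_apply, Matrix.one_apply,
      mul_one, Pi.zero_apply]
    rw [Finset.sum_sub_distrib, hrow z]
    simp
  have hdet : (P - 1).det = 0 := by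
    rw [← Matrix.exists_mulVec_eq_zero_iff]
    refine ⟨fun _ => (1 : ℝ), ?_, hones⟩
    intro h
    exact one_ne_zero (congrFun h x)
  -- get a nonzero left-kernel vector v
  obtain ⟨v, hv0, hv⟩ := (Matrix.exists_vecMul_eq_zero_iff).2 hdet
  have hvstat : ∀ y, ∑ x, v x * P x y = v y := by
    intro y
    have := congrFun hv y
    simp only [Matrix.vecMul, dotProduct, Matrix.sub_apply, Matrix.one_apply,
      mul_sub, mul_ite, mul_one, mul_zero, Pi.zero_apply,
      Finset.sum_sub_distrib, Finset.sum_ite_eq'] at this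
    simp only [Finset.mem_univ, if_true] at this
    linarith
  -- |v| is stationary, nonneg, nonzero, hence strictly positive
  have habs : ∀ y, ∑ x, |v x| * P x y = |v y| := abs_stationary P hnonneg hrow hvstat
  obtain ⟨x0, hx0⟩ : ∃ x0, v x0 ≠ 0 := by
    by_contra h
    push_neg at h
    exact hv0 (funext fun z => h z)
  have habspos : ∀ y, 0 < |v y| :=
    stationary_pos P hnonneg hirr habs (fun z => abs_nonneg _) (abs_pos.2 hx0)
  set s : ℝ := ∑ z, |v z| with hs
  have hspos : 0 < s := Finset.sum_pos (fun z _ => habspos z) ⟨x, Finset.mem_univ x⟩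
  set π : X → ℝ := fun z => |v z| / s with hπdef
  have hπstat : ∀ y, ∑ x, π x * P x y = π y := by
    intro y
    simp only [hπdef, div_mul_eq_mul_div, ← Finset.sum_div, habs y]
  have hπpos : ∀ z, 0 < π z := fun z => div_pos (habspos z) hspos
  have hπsum : ∑ z, π z = 1 := by
    simp only [hπdef, ← Finset.sum_div]
    rw [← hs, div_self (ne_of_gt hspos)]
  refine ⟨π, ⟨hπstat, hπpos, hπsum⟩, ?_⟩
  rintro q ⟨hq1, hq2, hq3⟩
  by_contra hneq
  set σ : X → ℝ := fun z => q z - π z with hσdef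
  have hσstat : ∀ y, ∑ x, σ x * P x y = σ y := by
    intro y
    simp only [hσdef, sub_mul, Finset.sum_sub_distrib, hq1 y, hπstat y]
  have hσsum : ∑ z, σ z = 0 := by
    simp only [hσdef, Finset.sum_sub_distrib, hq3, hπsum, sub_self]
  have hσne : ∃ z, σ z ≠ 0 := by
    by_contra h
    push_neg at h
    exact hneq (funext fun z => by have := h z; simp only [hσdef] at this; linarith)
  obtain ⟨z0, hz0⟩ := hσne
  -- σ has a strictly positive entry
  obtain ⟨x1, hx1⟩ : ∃ x1, 0 < σ x1 := by
    by_contra h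
    push_neg at h
    have hsum0 : ∑ z, (-σ z) = 0 := by simp [hσsum]
    have := (Finset.sum_eq_zero_iff_of_nonneg
      (fun z _ => neg_nonneg.2 (h z))).1 hsum0 z0 (Finset.mem_univ z0)
    exact hz0 (by linarith)
  have hσabs : ∀ y, ∑ x, |σ x| * P x y = |σ y| := abs_stationary P hnonneg hrow hσstat
  -- τ = |σ| - σ is stationary, nonneg, vanishes at x1, hence identically zero
  set τ : X → ℝ := fun z => |σ z| - σ z with hτdef
  have hτstat : ∀ y, ∑ x, τ x * P x y = τ y := by
    intro y
    simp only [hτdef, sub_mul, Finset.sum_sub_distrib, hσabs y, hσstat y]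
  have hτnn : ∀ z, 0 ≤ τ z := fun z => sub_nonneg.2 (le_abs_self _)
  have hτx1 : τ x1 = 0 := by simp [hτdef, abs_of_pos hx1]
  have hτ0 : ∀ z, τ z = 0 := by
    intro z
    by_contra h
    have hpos' : 0 < τ z := lt_of_le_of_ne (hτnn z) (Ne.symm h)
    have := stationary_pos P hnonneg hirr hτstat hτnn hpos' x1
    linarith
  -- so σ = |σ| everywhere, and |σ| is strictly positive, contradicting ∑ σ = 0
  have hallpos : ∀ z, 0 < |σ z| :=
    stationary_pos P hnonneg hirr hσabs (fun z => abs_nonneg _) (abs_pos.2 (ne_of_gt hx1))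
  have hσpos : ∀ z, 0 < σ z := by
    intro z
    have h1 := hτ0 z
    have h2 := hallpos z
    simp only [hτdef, sub_eq_zero] at h1
    linarith
  have : 0 < ∑ z, σ z := Finset.sum_pos (fun z _ => hσpos z) ⟨x, Finset.mem_univ x⟩
  linarith
end

section
/- For every nonempty proper subset A ⊊ X, the series ∑_{n=0}^∞ (P_A)^n converges entrywise, the matrix I_A − P_A is invertible, and (I_A − P_A)^{-1} = ∑_{n=0}^∞ (P_A)^n. -/
/-!
Let `Q = P_A`. It is substochastic, so the row sums of `Qⁿ` decrease in `n`. Irreducibility lets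
every `x ∈ A` reach some `y₀ ∉ A`, and the mass sent there is lost to `A`: the row sum of `Qⁿ` at
`x` drops below `1` for some `n`, hence for all large `n`. So for some `m`, every row sum of `Qᵐ`
is `< 1`, i.e. `‖Qᵐ‖ < 1` in the max-row-sum norm, and `∑ Qⁿ` converges absolutely; the
telescoping identity `(1 - Q) ∑ Qⁿ = 1 = (∑ Qⁿ)(1 - Q)` then identifies the sum as `(1 - Q)⁻¹`.
-/

open Matrix Finset

/-- The `A × A` submatrix of `P`. -/
def subMatrix {X : Type*} (P : Matrix X X ℝ) (A : Finset X) : Matrix A A ℝ :=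
  Matrix.of fun x y => P x.1 y.1

theorem summable_pow_of_norm_pow_lt_one {R : Type*} [NormedRing R] [HasSummableGeomSeries R]
    {x : R} {m : ℕ} (hm : m ≠ 0) (h : ‖x ^ m‖ < 1) : Summable (x ^ ·) := by
  have : NeZero m := ⟨hm⟩
  -- on the residue class of `r` mod `m` the series is `∑ (x ^ m) ^ k * x ^ r`, a geometric one
  have hres (r : ℕ) : Summable ({k : ℕ | (k : ZMod m) = r}.indicator (x ^ ·)) := by
    rw [summable_indicator_mod_iff_summable]
    simpa only [pow_add, pow_mul] using (summable_geometric_of_norm_lt_one h).mul_right (x ^ r)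
  refine (summable_sum (s := univ) fun (a : ZMod m) _ =>
    ZMod.natCast_zmod_val a ▸ hres a.val).congr fun k => ?_
  rw [← Finset.sum_apply, ← Finset.sum_indicator_mod]

namespace Matrix

variable {n R : Type*} [Fintype n]

theorem mulVec_le_mulVec_of_nonneg [Semiring R] [PartialOrder R] [IsOrderedRing R]
    {M : Matrix n n R} (hM : ∀ i j, 0 ≤ M i j) {v w : n → R} (hvw : v ≤ w) :
    M *ᵥ v ≤ M *ᵥ w := fun i =>
  Finset.sum_le_sum fun j _ => mul_le_mul_of_nonneg_left (hvw j) (hM i j)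

variable [DecidableEq n]

theorem isUnit_one_sub_of_summable_pow [Ring R] [TopologicalSpace R] [IsTopologicalRing R]
    [T2Space R] {Q : Matrix n n R} (h : Summable (Q ^ ·)) : IsUnit (1 - Q) :=
  ⟨⟨1 - Q, ∑' k, Q ^ k, h.one_sub_mul_tsum_pow, h.tsum_pow_mul_one_sub⟩, rfl⟩

theorem inv_one_sub_eq_tsum_pow [CommRing R] [TopologicalSpace R] [IsTopologicalRing R]
    [T2Space R] {Q : Matrix n n R} (h : Summable (Q ^ ·)) :
    (1 - Q)⁻¹ = of fun i j => ∑' k, (Q ^ k) i j := by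
  rw [inv_eq_right_inv h.one_sub_mul_tsum_pow]
  ext i j
  rw [of_apply, ← tsum_apply (Pi.summable.1 h i), ← tsum_apply h]
  rfl -- the sums differ only in using the `Matrix` rather than the `Pi` instances

section OrderedSemiring

variable [Semiring R] [PartialOrder R] [IsOrderedRing R] {Q : Matrix n n R}

theorem antitone_pow_mulVec_one (h0 : ∀ i j, 0 ≤ Q i j) (h1 : Q *ᵥ 1 ≤ 1) :
    Antitone fun k : ℕ => Q ^ k *ᵥ 1 :=
  antitone_nat_of_succ_le fun k => by
    rw [pow_succ, ← mulVec_mulVec]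
    exact mulVec_le_mulVec_of_nonneg (pow_apply_nonneg h0 k) h1

theorem exists_pow_mulVec_one_lt (h0 : ∀ i j, 0 ≤ Q i j) (h1 : Q *ᵥ 1 ≤ 1)
    (h : ∀ i, ∃ k, (Q ^ k *ᵥ 1) i < 1) : ∃ m ≠ 0, ∀ i, (Q ^ m *ᵥ 1) i < 1 := by
  have hev (i : n) : ∀ᶠ k in Filter.atTop, (Q ^ k *ᵥ 1) i < 1 := by
    obtain ⟨k, hk⟩ := h i
    exact Filter.eventually_atTop.2
      ⟨k, fun l hl => (antitone_pow_mulVec_one h0 h1 hl i).trans_lt hk⟩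
  obtain ⟨m, hm, hm0⟩ :=
    ((Filter.eventually_all.2 hev).and (Filter.eventually_ne_atTop 0)).exists
  exact ⟨m, hm0, hm⟩

end OrderedSemiring

section LinftyOpNorm

attribute [local instance] Matrix.linftyOpNormedRing Matrix.linftyOpNormedSpace

theorem linfty_opNorm_lt_one_of_nonneg {M : Matrix n n ℝ} (h0 : ∀ i j, 0 ≤ M i j)
    (h : ∀ i, (M *ᵥ 1) i < 1) : ‖M‖ < 1 := by
  rw [linfty_opNorm_def, ← NNReal.coe_one, NNReal.coe_lt_coe, Finset.sup_lt_iff one_pos]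
  intro i _
  rw [← NNReal.coe_lt_coe]
  simpa [mulVec, dotProduct, Real.norm_of_nonneg (h0 i _)] using h i

theorem summable_pow_of_pow_mulVec_one_lt {Q : Matrix n n ℝ} (h0 : ∀ i j, 0 ≤ Q i j) {m : ℕ}
    (hm : m ≠ 0) (hQm : ∀ i, (Q ^ m *ᵥ 1) i < 1) : Summable (Q ^ ·) :=
  have := FiniteDimensional.complete ℝ (Matrix n n ℝ)
  summable_pow_of_norm_pow_lt_one hm
    (linfty_opNorm_lt_one_of_nonneg (pow_apply_nonneg h0 m) hQm)

end LinftyOpNorm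

end Matrix

section SubMatrix

variable {X : Type*} [Fintype X] [DecidableEq X] {P : Matrix X X ℝ}

theorem subMatrix_pow_apply_le (hP : ∀ x y, 0 ≤ P x y) (A : Finset X) (k : ℕ) (x y : A) :
    (subMatrix P A ^ k) x y ≤ (P ^ k) x y := by
  induction k generalizing y with
  | zero => by_cases h : x = y <;> simp [one_apply, h, Subtype.val_injective.ne]
  | succ k ih =>
    rw [pow_succ, pow_succ, mul_apply, mul_apply]
    calc ∑ z : A, (subMatrix P A ^ k) x z * P z y
        ≤ ∑ z : A, (P ^ k) x z * P z y :=
          Finset.sum_le_sum fun z _ => mul_le_mul_of_nonneg_right (ih z) (hP z y)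
      _ = ∑ z ∈ A, (P ^ k) x z * P z y := Finset.sum_coe_sort A fun z => (P ^ k) x z * P z y
      _ ≤ ∑ z, (P ^ k) x z * P z y :=
          Finset.sum_le_univ_sum_of_nonneg fun z =>
            mul_nonneg (pow_apply_nonneg hP k x z) (hP z y)

theorem subMatrix_pow_mulVec_one_le_sum (hP : ∀ x y, 0 ≤ P x y) (A : Finset X) (k : ℕ)
    (x : A) : (subMatrix P A ^ k *ᵥ 1) x ≤ ∑ y ∈ A, (P ^ k) x y := by
  simp only [mulVec, dotProduct, Pi.one_apply, mul_one]
  rw [← Finset.sum_coe_sort A]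
  exact Finset.sum_le_sum fun y _ => subMatrix_pow_apply_le hP A k x y

variable (hP : P ∈ rowStochastic ℝ X) {A : Finset X}
include hP

theorem subMatrix_pow_mulVec_one_le_one (k : ℕ) : subMatrix P A ^ k *ᵥ 1 ≤ 1 := fun x =>
  have hPk := pow_mem hP k
  calc (subMatrix P A ^ k *ᵥ 1) x ≤ ∑ y ∈ A, (P ^ k) x y :=
        subMatrix_pow_mulVec_one_le_sum (fun _ _ => nonneg_of_mem_rowStochastic hP) A k x
    _ ≤ ∑ y, (P ^ k) x y :=
        Finset.sum_le_univ_sum_of_nonneg fun _ => nonneg_of_mem_rowStochastic hPk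
    _ = 1 := sum_row_of_mem_rowStochastic hPk x

theorem subMatrix_pow_mulVec_one_lt {y₀ : X} (hy₀ : y₀ ∉ A) {k : ℕ} {x : A}
    (hk : 0 < (P ^ k) x y₀) : (subMatrix P A ^ k *ᵥ 1) x < 1 :=
  have hPk := pow_mem hP k
  calc (subMatrix P A ^ k *ᵥ 1) x ≤ ∑ y ∈ A, (P ^ k) x y :=
        subMatrix_pow_mulVec_one_le_sum (fun _ _ => nonneg_of_mem_rowStochastic hP) A k x
    _ < ∑ y, (P ^ k) x y :=
        Finset.sum_lt_sum_of_subset (subset_univ A) (mem_univ _) hy₀ hk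
          fun _ _ _ => nonneg_of_mem_rowStochastic hPk
    _ = 1 := sum_row_of_mem_rowStochastic hPk x

end SubMatrix

theorem green_kernel_series_general {X : Type*} [Fintype X] [DecidableEq X]
    (P : Matrix X X ℝ)
    (hnonneg : ∀ x y, 0 ≤ P x y)
    (hrow : ∀ x, ∑ y, P x y = 1)
    (hirr : ∀ x y, ∃ n, 1 ≤ n ∧ 0 < (P ^ n) x y)
    (A : Finset X) (hA' : A ≠ Finset.univ) :
    (∀ x y : A, Summable fun n : ℕ => ((subMatrix P A) ^ n) x y) ∧
    IsUnit (1 - subMatrix P A) ∧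
    (1 - subMatrix P A)⁻¹ = Matrix.of fun x y => ∑' n : ℕ, ((subMatrix P A) ^ n) x y := by
  have hP : P ∈ rowStochastic ℝ X := mem_rowStochastic_iff_sum.2 ⟨hnonneg, hrow⟩
  have hQ : ∀ x y, 0 ≤ subMatrix P A x y := fun x y => hnonneg x y
  obtain ⟨y₀, hy₀⟩ : ∃ y, y ∉ A := by simpa [Finset.eq_univ_iff_forall] using hA'
  have hQ1 : subMatrix P A *ᵥ 1 ≤ 1 :=
    pow_one (subMatrix P A) ▸ subMatrix_pow_mulVec_one_le_one hP 1
  obtain ⟨m, hm, hQm⟩ := exists_pow_mulVec_one_lt hQ hQ1 fun x =>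
    have ⟨k, _, hk⟩ := hirr x y₀
    ⟨k, subMatrix_pow_mulVec_one_lt hP hy₀ hk⟩
  have hsum := summable_pow_of_pow_mulVec_one_lt hQ hm hQm
  exact ⟨fun x y => Pi.summable.1 (Pi.summable.1 hsum x) y, isUnit_one_sub_of_summable_pow hsum,
    inv_one_sub_eq_tsum_pow hsum⟩

/-- For every nonempty proper subset `A ⊊ X`, the series `∑ₙ (P_A)ⁿ`
converges entrywise, `I_A − P_A` is invertible, and `(I_A − P_A)⁻¹ = ∑ₙ (P_A)ⁿ`. -/
theorem green_kernel_series {X : Type*} [Fintype X] [DecidableEq X]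
    (P : Matrix X X ℝ)
    (hcard : 1 < Fintype.card X)
    (hnonneg : ∀ x y, 0 ≤ P x y)
    (hrow : ∀ x, ∑ y, P x y = 1)
    (hirr : ∀ x y, ∃ n, 1 ≤ n ∧ 0 < (P ^ n) x y)
    (A : Finset X) (hA : A.Nonempty) (hA' : A ≠ Finset.univ) :
    (∀ x y : A, Summable fun n : ℕ => ((subMatrix P A) ^ n) x y) ∧
    IsUnit (1 - subMatrix P A) ∧
    (1 - subMatrix P A)⁻¹ = Matrix.of fun x y => ∑' n : ℕ, ((subMatrix P A) ^ n) x y :=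
  green_kernel_series_general P hnonneg hrow hirr A hA'
end

section
/- Fix o ∈ X and let f ∈ L(X). The Poisson equation Δu = f has a solution u ∈ L(X) if and only if ∫_X f dπ = 0. In that case the unique solution with u(o) = 0 is given by u(o) = 0 and u(x) = −∑_{y∈X∖{o}} G_{X∖{o}}(x,y) f(y) for x ∈ X∖{o}, and the set of all solutions is exactly {u + c : c ∈ ℂ} (u plus constant functions). -/
/-! On `A = X ∖ {o}` the Laplacian of a function vanishing at `o` is `-(I_A - P_A)` applied to its
restriction, and `I_A - P_A` is injective by the maximum principle: a real function harmonic on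
`A` and vanishing off `A` takes its maximum on a set closed under the transitions of `P`, which by
irreducibility contains `o`; so the maximum is `0`, and likewise the minimum. Hence `-G_A f` solves
`Δu = f` on `A`, and at `o` the equation follows from `∫ Δu dπ = 0 = ∫ f dπ` because `π(o) > 0`.
Two solutions differ by a harmonic function, which is constant by the same maximum principle. -/

open Matrix Finset

/-- The Laplacian `Δu = Pu − u` acting on complex functions. -/
noncomputable def lap {X : Type*} [Fintype X] (P : Matrix X X ℝ) (u : X → ℂ) (x : X) : ℂ :=
  (∑ y, (P x y : ℂ) * u y) - u x

/-- The Green kernel `G_A = (I_A − P_A)⁻¹`. -/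
noncomputable def green {X : Type*} [DecidableEq X] (P : Matrix X X ℝ) (A : Finset X) :
    Matrix A A ℝ :=
  (1 - subMatrix P A)⁻¹

section

variable {X : Type*} [Fintype X] {P : Matrix X X ℝ}

theorem eq_of_forall_le_of_sum_mul_eq (hnonneg : ∀ x y, 0 ≤ P x y) (hrow : ∀ x, ∑ y, P x y = 1)
    {w : X → ℝ} {x : X} (hmax : ∀ y, w y ≤ w x) (hx : ∑ y, P x y * w y = w x) {y : X}
    (hxy : 0 < P x y) : w y = w x := by
  have hsum : ∑ t, P x t * (w x - w t) = 0 := by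
    simp only [mul_sub, sum_sub_distrib, ← sum_mul, hrow, one_mul, hx, sub_self]
  have hterm := (sum_eq_zero_iff_of_nonneg fun t _ =>
    mul_nonneg (hnonneg x t) (sub_nonneg.2 (hmax t))).1 hsum y (mem_univ y)
  exact (sub_eq_zero.1 ((mul_eq_zero.1 hterm).resolve_left hxy.ne')).symm

section MaximumPrinciple

variable [DecidableEq X]

theorem mem_of_pow_apply_pos (hnonneg : ∀ x y, 0 ≤ P x y) {S : Set X}
    (hS : ∀ x ∈ S, ∀ y, 0 < P x y → y ∈ S) :
    ∀ (n : ℕ) {x y : X}, x ∈ S → 0 < (P ^ n) x y → y ∈ S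
  | 0, x, y, hx, hxy => by
    obtain rfl : x = y := by by_contra h; simp [one_apply_ne h] at hxy
    exact hx
  | n + 1, x, y, hx, hxy => by
    rw [pow_succ, mul_apply, ← sum_const_zero (s := (univ : Finset X))] at hxy
    obtain ⟨t, -, ht⟩ := exists_lt_of_sum_lt hxy
    exact hS t (mem_of_pow_apply_pos hnonneg hS n hx (pos_of_mul_pos_left ht (hnonneg t y))) y
      (pos_of_mul_pos_right ht (pow_apply_nonneg hnonneg n x t))

variable {o : X} {A : Finset X}

theorem le_zero_of_harmonic_on (hreach : ∀ x, ∃ n, 0 < (P ^ n) x o) (ho : o ∉ A)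
    (hnonneg : ∀ x y, 0 ≤ P x y) (hrow : ∀ x, ∑ y, P x y = 1)
    {w : X → ℝ} (hharm : ∀ x ∈ A, ∑ y, P x y * w y = w x) (hout : ∀ x ∉ A, w x ≤ 0) (x : X) :
    w x ≤ 0 := by
  have : Nonempty X := ⟨o⟩
  obtain ⟨z, hz⟩ := Finite.exists_max w
  by_contra! hx
  have hmemA : ∀ y, w y = w z → y ∈ A := fun y hy =>
    by_contra fun hyA => (hout y hyA).not_gt (hy ▸ hx.trans_le (hz x))
  have hclosed : ∀ y ∈ {y | w y = w z}, ∀ t, 0 < P y t → t ∈ {y | w y = w z} :=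
    fun y (hy : w y = w z) t hyt =>
      (eq_of_forall_le_of_sum_mul_eq hnonneg hrow (hy ▸ hz) (hharm y (hmemA y hy)) hyt).trans hy
  obtain ⟨n, hn⟩ := hreach z
  exact ho (hmemA o (mem_of_pow_apply_pos hnonneg hclosed n rfl hn))

theorem eq_zero_of_harmonic_on (hreach : ∀ x, ∃ n, 0 < (P ^ n) x o) (ho : o ∉ A)
    (hnonneg : ∀ x y, 0 ≤ P x y) (hrow : ∀ x, ∑ y, P x y = 1)
    {w : X → ℝ} (hharm : ∀ x ∈ A, ∑ y, P x y * w y = w x) (hout : ∀ x ∉ A, w x = 0) :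
    w = 0 := by
  have hneg : ∀ x ∈ A, ∑ y, P x y * (-w) y = (-w) x := fun x hx => by
    simp [mul_neg, sum_neg_distrib, hharm x hx]
  funext x
  exact le_antisymm
    (le_zero_of_harmonic_on hreach ho hnonneg hrow hharm (fun y hy => (hout y hy).le) x)
    (neg_nonpos.1 <|
      le_zero_of_harmonic_on hreach ho hnonneg hrow hneg (fun y hy => by simp [hout y hy]) x)

theorem eq_zero_of_lap_eq_zero_on (hreach : ∀ x, ∃ n, 0 < (P ^ n) x o) (ho : o ∉ A)
    (hnonneg : ∀ x y, 0 ≤ P x y) (hrow : ∀ x, ∑ y, P x y = 1)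
    {u : X → ℂ} (hharm : ∀ x ∈ A, lap P u x = 0) (hout : ∀ x ∉ A, u x = 0) : u = 0 := by
  have hsum : ∀ x ∈ A, ∑ y, (P x y : ℂ) * u y = u x := fun x hx => sub_eq_zero.1 (hharm x hx)
  have hre := eq_zero_of_harmonic_on hreach ho hnonneg hrow (w := fun x => (u x).re)
    (fun x hx => by simpa [Complex.re_sum] using congrArg Complex.re (hsum x hx))
    (fun x hx => by simp [hout x hx])
  have him := eq_zero_of_harmonic_on hreach ho hnonneg hrow (w := fun x => (u x).im)
    (fun x hx => by simpa [Complex.im_sum] using congrArg Complex.im (hsum x hx))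
    (fun x hx => by simp [hout x hx])
  funext x
  exact Complex.ext (congrFun hre x) (congrFun him x)

end MaximumPrinciple

section GreenKernel

variable [DecidableEq X] {A : Finset X}

theorem mapMatrix_one_sub_subMatrix_mulVec {u : X → ℂ} (hout : ∀ x ∉ A, u x = 0) (x : A) :
    (Complex.ofRealHom.mapMatrix (1 - subMatrix P A) *ᵥ fun y : A => u y) x = -lap P u x := by
  have hsum : ∑ y : A, (P x y : ℂ) * u y = ∑ y, (P x y : ℂ) * u y :=
    (sum_coe_sort A fun y => (P x y : ℂ) * u y).trans
      (sum_subset (subset_univ A) fun y _ hy => by simp [hout y hy])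
  rw [map_sub, map_one, sub_mulVec, one_mulVec, lap, ← hsum]
  simp [mulVec, dotProduct, subMatrix]

theorem isUnit_det_one_sub_subMatrix {o : X} (hreach : ∀ x, ∃ n, 0 < (P ^ n) x o) (ho : o ∉ A)
    (hnonneg : ∀ x y, 0 ≤ P x y) (hrow : ∀ x, ∑ y, P x y = 1) :
    IsUnit (1 - subMatrix P A).det := by
  refine isUnit_iff_ne_zero.2 fun hdet => ?_
  obtain ⟨v, hv0, hv⟩ := exists_mulVec_eq_zero_iff.2 <|
    show (Complex.ofRealHom.mapMatrix (1 - subMatrix P A)).det = 0 by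
      rw [← RingHom.map_det, hdet, map_zero]
  set u : X → ℂ := fun x => if h : x ∈ A then v ⟨x, h⟩ else 0
  have hout : ∀ x ∉ A, u x = 0 := fun x hx => dif_neg hx
  have hrestrict : (fun y : A => u y) = v := funext fun y => dif_pos y.2
  have hharm : ∀ x ∈ A, lap P u x = 0 := fun x hx => by
    have := mapMatrix_one_sub_subMatrix_mulVec (P := P) hout ⟨x, hx⟩
    rw [hrestrict, hv] at this
    exact neg_eq_zero.1 this.symm
  refine hv0 ?_
  rw [← hrestrict, eq_zero_of_lap_eq_zero_on hreach ho hnonneg hrow hharm hout]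
  rfl

variable (P A) in
noncomputable def greenPotential (f : X → ℂ) (x : X) : ℂ :=
  if h : x ∈ A then -∑ y : A, (green P A ⟨x, h⟩ y : ℂ) * f y else 0

theorem lap_greenPotential (h : IsUnit (1 - subMatrix P A).det) (f : X → ℂ) {x : X}
    (hx : x ∈ A) : lap P (greenPotential P A f) x = f x := by
  have hrestrict : (fun y : A => greenPotential P A f y) =
      -(Complex.ofRealHom.mapMatrix (green P A) *ᵥ fun y : A => f y) := by
    funext y
    simp [greenPotential, mulVec, dotProduct]
  have hinv : Complex.ofRealHom.mapMatrix (1 - subMatrix P A) *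
      Complex.ofRealHom.mapMatrix (green P A) = 1 := by
    rw [← map_mul, green, mul_nonsing_inv _ h, map_one]
  have := mapMatrix_one_sub_subMatrix_mulVec (P := P) (u := greenPotential P A f)
    (fun y hy => dif_neg hy) ⟨x, hx⟩
  rw [hrestrict, mulVec_neg, mulVec_mulVec, hinv, one_mulVec] at this
  simpa using this.symm

end GreenKernel

theorem sum_mul_lap_eq_zero {π : X → ℝ} (hπ : ∀ y, ∑ x, π x * P x y = π y) (u : X → ℂ) :
    ∑ x, (π x : ℂ) * lap P u x = 0 := by
  have hπC : ∀ y, ∑ x, (π x : ℂ) * P x y = π y := fun y => by exact_mod_cast hπ y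
  simp only [lap, mul_sub, sum_sub_distrib, mul_sum, ← mul_assoc]
  rw [sum_comm]
  simp only [← sum_mul, hπC, sub_self]

theorem lap_sub (u w : X → ℂ) (x : X) : lap P (u - w) x = lap P u x - lap P w x := by
  simp only [lap, Pi.sub_apply, mul_sub, sum_sub_distrib]
  ring

theorem lap_add_const (hrow : ∀ x, ∑ y, P x y = 1) (u : X → ℂ) (c : ℂ) (x : X) :
    lap P (fun y => u y + c) x = lap P u x := by
  have hrowC : ∑ y, (P x y : ℂ) = 1 := by exact_mod_cast hrow x
  simp only [lap, mul_add, sum_add_distrib, ← sum_mul, hrowC]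
  ring

section Poisson

variable [DecidableEq X] {o : X}

theorem eq_of_lap_eq_of_apply_eq (hreach : ∀ x, ∃ n, 0 < (P ^ n) x o)
    (hnonneg : ∀ x y, 0 ≤ P x y) (hrow : ∀ x, ∑ y, P x y = 1) {u w : X → ℂ}
    (hlap : ∀ x, lap P u x = lap P w x) (ho : u o = w o) : u = w := by
  refine sub_eq_zero.1 (eq_zero_of_lap_eq_zero_on hreach (notMem_erase o univ) hnonneg hrow
    (fun x _ => by rw [lap_sub, hlap, sub_self]) fun x hx => ?_)
  obtain rfl : x = o := by simpa using hx
  simp [ho]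

theorem lap_greenPotential_erase (hreach : ∀ x, ∃ n, 0 < (P ^ n) x o)
    (hnonneg : ∀ x y, 0 ≤ P x y) (hrow : ∀ x, ∑ y, P x y = 1) {π : X → ℝ}
    (hπ : ∀ y, ∑ x, π x * P x y = π y) (hπo : π o ≠ 0) {f : X → ℂ}
    (hf : ∑ x, (π x : ℂ) * f x = 0) (x : X) :
    lap P (greenPotential P (univ.erase o) f) x = f x := by
  set u := greenPotential P (univ.erase o) f
  have hoff : ∀ y ≠ o, lap P u y = f y := fun y hy =>
    lap_greenPotential (isUnit_det_one_sub_subMatrix hreach (notMem_erase o univ) hnonneg hrow)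
      f (mem_erase_of_ne_of_mem hy (mem_univ y))
  obtain rfl | hx := eq_or_ne x o
  · have hsum : ∑ y, (π y : ℂ) * (lap P u y - f y) = (π x : ℂ) * (lap P u x - f x) :=
      sum_eq_single_of_mem x (mem_univ x) fun y _ hy => by rw [hoff y hy, sub_self, mul_zero]
    have hzero : (π x : ℂ) * (lap P u x - f x) = 0 := by
      rw [← hsum]
      simp only [mul_sub, sum_sub_distrib, sum_mul_lap_eq_zero hπ, hf, sub_self]
    exact sub_eq_zero.1 ((mul_eq_zero.1 hzero).resolve_left (Complex.ofReal_ne_zero.2 hπo))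
  · exact hoff x hx

end Poisson

end

theorem poisson_equation_general {X : Type*} [Fintype X] [DecidableEq X]
    (P : Matrix X X ℝ)
    (hnonneg : ∀ x y, 0 ≤ P x y)
    (hrow : ∀ x, ∑ y, P x y = 1)
    (hirr : ∀ x y, ∃ n, 1 ≤ n ∧ 0 < (P ^ n) x y)
    (π : X → ℝ)
    (hπstat : ∀ y, ∑ x, π x * P x y = π y)
    (hπpos : ∀ x, 0 < π x)
    (o : X) (f : X → ℂ) :
    ((∃ u : X → ℂ, ∀ x, lap P u x = f x) ↔ ∑ x, (π x : ℂ) * f x = 0) ∧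
    (∑ x, (π x : ℂ) * f x = 0 →
      ∃ u : X → ℂ,
        (∀ x, lap P u x = f x) ∧ u o = 0 ∧
        (∀ x, ∀ hx : x ≠ o,
          u x = -∑ y : ↥(Finset.univ.erase o),
            ((green P (Finset.univ.erase o)
                ⟨x, Finset.mem_erase_of_ne_of_mem hx (Finset.mem_univ x)⟩ y : ℝ) : ℂ)
              * f y.1) ∧
        (∀ w : X → ℂ, ((∀ x, lap P w x = f x) ∧ w o = 0) → w = u) ∧
        (∀ w : X → ℂ, (∀ x, lap P w x = f x) ↔ ∃ c : ℂ, w = fun x => u x + c)) := by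
  have hreach : ∀ x, ∃ n, 0 < (P ^ n) x o := fun x => (hirr x o).imp fun _ => And.right
  have hsolve := lap_greenPotential_erase hreach hnonneg hrow hπstat (hπpos o).ne' (f := f)
  have hunique : ∀ {u w : X → ℂ}, (∀ x, lap P u x = lap P w x) → u o = w o → u = w :=
    eq_of_lap_eq_of_apply_eq hreach hnonneg hrow
  refine ⟨⟨fun ⟨w, hw⟩ => ?_, fun hf => ⟨_, hsolve hf⟩⟩, fun hf => ?_⟩
  · simpa only [hw] using sum_mul_lap_eq_zero hπstat w
  set u := greenPotential P (univ.erase o) f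
  have huo : u o = 0 := dif_neg (notMem_erase o univ)
  refine ⟨u, hsolve hf, huo, fun x hx => dif_pos _, fun w ⟨hw, hwo⟩ => ?_,
    fun w => ⟨fun hw => ?_, ?_⟩⟩
  · exact hunique (fun x => by rw [hw, hsolve hf]) (by rw [hwo, huo])
  · exact ⟨w o, hunique (fun x => by rw [hw, lap_add_const hrow, hsolve hf])
      (by rw [huo, zero_add])⟩
  · rintro ⟨c, rfl⟩ x
    rw [lap_add_const hrow, hsolve hf]

/-- Solution of the Poisson equation `Δu = f`: it is solvable iff
`∫_X f dπ = 0`; in that case the unique grounded solution (`u o = 0`) is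
`u = −G_{X∖{o}} f` on `X∖{o}`, and all solutions are `u + c`, `c ∈ ℂ`. -/
theorem poisson_equation {X : Type*} [Fintype X] [DecidableEq X]
    (P : Matrix X X ℝ)
    (hcard : 1 < Fintype.card X)
    (hnonneg : ∀ x y, 0 ≤ P x y)
    (hrow : ∀ x, ∑ y, P x y = 1)
    (hirr : ∀ x y, ∃ n, 1 ≤ n ∧ 0 < (P ^ n) x y)
    (π : X → ℝ)
    (hπstat : ∀ y, ∑ x, π x * P x y = π y)
    (hπpos : ∀ x, 0 < π x) (hπsum : ∑ x, π x = 1)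
    (o : X) (f : X → ℂ) :
    ((∃ u : X → ℂ, ∀ x, lap P u x = f x) ↔ ∑ x, (π x : ℂ) * f x = 0) ∧
    (∑ x, (π x : ℂ) * f x = 0 →
      ∃ u : X → ℂ,
        (∀ x, lap P u x = f x) ∧ u o = 0 ∧
        (∀ x, ∀ hx : x ≠ o,
          u x = -∑ y : ↥(Finset.univ.erase o),
            ((green P (Finset.univ.erase o)
                ⟨x, Finset.mem_erase_of_ne_of_mem hx (Finset.mem_univ x)⟩ y : ℝ) : ℂ)
              * f y.1) ∧
        (∀ w : X → ℂ, ((∀ x, lap P w x = f x) ∧ w o = 0) → w = u) ∧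
        (∀ w : X → ℂ, (∀ x, lap P w x = f x) ↔ ∃ c : ℂ, w = fun x => u x + c)) :=
  poisson_equation_general P hnonneg hrow hirr π hπstat hπpos o f
end

section
/- For every f ∈ L(X°) and g ∈ L(∂X) there exists a unique u ∈ L(X) such that Δu = f on X° and u = g on ∂X. It is given by u_{X°} = −G_{X°}( f − P_{X°,∂X} g ) and u_{∂X} = g. -/
open Matrix Finset

lemma det_one_sub_ne {X : Type*} [Fintype X] [DecidableEq X]
    (P : Matrix X X ℝ)
    (hnonneg : ∀ x y, 0 ≤ P x y)
    (hrow : ∀ x, ∑ y, P x y = 1)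
    (hirr : ∀ x y, ∃ n, 1 ≤ n ∧ 0 < (P ^ n) x y)
    (Bnd : Finset X) (hB : Bnd.Nonempty) :
    (1 - subMatrix P Bndᶜ).det ≠ 0 := by
  intro hdet
  obtain ⟨v, hv0, hmul⟩ := Matrix.exists_mulVec_eq_zero_iff.2 hdet
  -- v is a fixed point of subMatrix
  have hfix : ∀ x : ↥(Bndᶜ), ∑ y : ↥(Bndᶜ), P x.1 y.1 * v y = v x := by
    intro x
    have h1 := congrFun hmul x
    rw [Matrix.sub_mulVec, Matrix.one_mulVec] at h1
    have h2 : (subMatrix P Bndᶜ).mulVec v x = v x := by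
      have := sub_eq_zero.1 h1
      linarith [this]
    rw [← h2]
    simp [Matrix.mulVec, dotProduct, subMatrix]
  have hne : Nonempty ↥(Bndᶜ) := by
    obtain ⟨x, hx⟩ := Function.ne_iff.1 hv0
    exact ⟨x⟩
  obtain ⟨x0, -, hx0⟩ := Finset.exists_max_image (Finset.univ : Finset ↥(Bndᶜ))
    (fun x => |v x|) Finset.univ_nonempty
  set M := |v x0| with hMdef
  have hMpos : 0 < M := by
    obtain ⟨x, hx⟩ := Function.ne_iff.1 hv0
    exact lt_of_lt_of_le (abs_pos.2 hx) (hx0 x (Finset.mem_univ x))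
  -- nonnegativity of powers
  have hPn : ∀ n x y, 0 ≤ (P ^ n) x y := by
    intro n
    induction n with
    | zero => intro x y; by_cases h : x = y <;> simp [Matrix.one_apply, h]
    | succ n ih =>
      intro x y
      rw [pow_succ, Matrix.mul_apply]
      exact Finset.sum_nonneg fun z _ => mul_nonneg (ih x z) (hnonneg z y)
  -- closure step
  have key : ∀ x : ↥(Bndᶜ), |v x| = M → ∀ y : X, 0 < P x.1 y →
      ∃ hy : y ∈ Bndᶜ, |v ⟨y, hy⟩| = M := by
    intro x hx y hPy
    have hsum1 : M ≤ ∑ z : ↥(Bndᶜ), P x.1 z.1 * |v z| := by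
      calc M = |v x| := hx.symm
        _ = |∑ z : ↥(Bndᶜ), P x.1 z.1 * v z| := by rw [hfix x]
        _ ≤ ∑ z : ↥(Bndᶜ), |P x.1 z.1 * v z| := Finset.abs_sum_le_sum_abs _ _
        _ = ∑ z : ↥(Bndᶜ), P x.1 z.1 * |v z| := by
            refine Finset.sum_congr rfl fun z _ => ?_
            rw [abs_mul, abs_of_nonneg (hnonneg x.1 z.1)]
    have hle : ∀ z : ↥(Bndᶜ), z ∈ Finset.univ → P x.1 z.1 * |v z| ≤ P x.1 z.1 * M :=
      fun z _ => mul_le_mul_of_nonneg_left (hx0 z (Finset.mem_univ z)) (hnonneg x.1 z.1)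
    have hsub : ∑ z : ↥(Bndᶜ), P x.1 z.1 = ∑ z ∈ Bndᶜ, P x.1 z := Finset.sum_coe_sort _ _
    have hle1 : ∑ z ∈ Bndᶜ, P x.1 z ≤ 1 := by
      rw [← hrow x.1]
      exact Finset.sum_le_sum_of_subset_of_nonneg (Finset.subset_univ _)
        (fun z _ _ => hnonneg x.1 z)
    have hsum2 : ∑ z : ↥(Bndᶜ), P x.1 z.1 * M ≤ M := by
      rw [← Finset.sum_mul, hsub]
      nlinarith
    have heq : ∑ z : ↥(Bndᶜ), P x.1 z.1 * |v z| = ∑ z : ↥(Bndᶜ), P x.1 z.1 * M := by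
      have := Finset.sum_le_sum hle
      linarith
    have hterm : ∀ z : ↥(Bndᶜ), z ∈ Finset.univ → P x.1 z.1 * |v z| = P x.1 z.1 * M :=
      (Finset.sum_eq_sum_iff_of_le hle).1 heq
    have hrow1 : ∑ z ∈ Bndᶜ, P x.1 z = 1 := by
      have h2 : (∑ z : ↥(Bndᶜ), P x.1 z.1) * M = M := by
        have := Finset.sum_le_sum hle
        rw [← Finset.sum_mul] at *
        nlinarith
      rw [hsub] at h2
      have := mul_right_cancel₀ (ne_of_gt hMpos) (by rw [h2, one_mul] : (∑ z ∈ Bndᶜ, P x.1 z) * M = 1 * M)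
      exact this
    -- y must be in Bndᶜ
    have hyA : y ∈ Bndᶜ := by
      by_contra hy
      have hzero : ∑ z ∈ Bnd, P x.1 z = 0 := by
        have := Finset.sum_add_sum_compl Bnd (fun z => P x.1 z)
        rw [hrow1, hrow x.1] at this
        linarith
      have := (Finset.sum_eq_zero_iff_of_nonneg (fun z _ => hnonneg x.1 z)).1 hzero y
        (by simpa using hy)
      exact absurd this (ne_of_gt hPy)
    refine ⟨hyA, ?_⟩
    have := hterm ⟨y, hyA⟩ (Finset.mem_univ _)
    exact mul_left_cancel₀ (ne_of_gt hPy) this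
  -- propagate along powers
  have prop : ∀ n (y : X), 0 < (P ^ n) x0.1 y → ∃ hy : y ∈ Bndᶜ, |v ⟨y, hy⟩| = M := by
    intro n
    induction n with
    | zero =>
      intro y hy
      rw [pow_zero] at hy
      by_cases h : x0.1 = y
      · subst h; exact ⟨x0.2, rfl⟩
      · simp [Matrix.one_apply, h] at hy
    | succ n ih =>
      intro y hy
      rw [pow_succ, Matrix.mul_apply] at hy
      obtain ⟨z, -, hz⟩ := Finset.exists_lt_of_sum_lt (by simpa using hy :
        ∑ z : X, (0:ℝ) < ∑ z, (P ^ n) x0.1 z * P z y)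
      have hz1 : 0 < (P ^ n) x0.1 z := by
        rcases lt_or_eq_of_le (hPn n x0.1 z) with h | h
        · exact h
        · rw [← h, zero_mul] at hz; exact absurd hz (lt_irrefl 0)
      have hz2 : 0 < P z y := by
        rcases lt_or_eq_of_le (hnonneg z y) with h | h
        · exact h
        · rw [← h, mul_zero] at hz; exact absurd hz (lt_irrefl 0)
      obtain ⟨hzA, hzM⟩ := ih z hz1
      exact key ⟨z, hzA⟩ hzM y hz2
  obtain ⟨b, hb⟩ := hB
  obtain ⟨n, -, hn⟩ := hirr x0.1 b
  obtain ⟨hbA, -⟩ := prop n b hn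
  rw [Finset.mem_compl] at hbA
  exact hbA hb

/-- Solution of the Dirichlet problem: for `f ∈ L(X°)`, `g ∈ L(∂X)`
there is a unique `u` with `Δu = f` on `X°` and `u = g` on `∂X`, given by
`u_{X°} = −G_{X°}(f − P_{X°,∂X} g)`, `u_{∂X} = g`. -/
theorem dirichlet_problem {X : Type*} [Fintype X] [DecidableEq X]
    (P : Matrix X X ℝ)
    (hcard : 1 < Fintype.card X)
    (hnonneg : ∀ x y, 0 ≤ P x y)
    (hrow : ∀ x, ∑ y, P x y = 1)
    (hirr : ∀ x y, ∃ n, 1 ≤ n ∧ 0 < (P ^ n) x y)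
    (Bnd : Finset X) (hB : Bnd.Nonempty) (hB' : Bnd ≠ Finset.univ)
    (f g : X → ℂ) :
    (∃! u : X → ℂ, (∀ x, x ∉ Bnd → lap P u x = f x) ∧ (∀ x ∈ Bnd, u x = g x)) ∧
    (∀ u : X → ℂ,
      ((∀ x, x ∉ Bnd → lap P u x = f x) ∧ (∀ x ∈ Bnd, u x = g x)) →
      ∀ x, ∀ hx : x ∈ Bndᶜ,
        u x = -∑ y : ↥Bndᶜ, ((green P Bndᶜ ⟨x, hx⟩ y : ℝ) : ℂ) *
          (f y.1 - ∑ z : ↥Bnd, ((P y.1 z.1 : ℝ) : ℂ) * g z.1)) := by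
  have hdet := det_one_sub_ne P hnonneg hrow hirr Bnd hB
  have hdetU : IsUnit (1 - subMatrix P Bndᶜ).det := isUnit_iff_ne_zero.2 hdet
  set Sc : Matrix ↥(Bndᶜ) ↥(Bndᶜ) ℂ := (subMatrix P Bndᶜ).map Complex.ofRealHom with hScdef
  set Gc : Matrix ↥(Bndᶜ) ↥(Bndᶜ) ℂ := (green P Bndᶜ).map Complex.ofRealHom with hGcdef
  have hmapsub : (1 - subMatrix P Bndᶜ).map (Complex.ofRealHom : ℝ → ℂ) = 1 - Sc := by
    rw [Matrix.map_sub _ (by simp)]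
    congr 1
    exact Matrix.map_one _ (by simp) (by simp)
  have hGc1 : (1 - Sc) * Gc = 1 := by
    rw [← hmapsub, hGcdef, green, ← Matrix.map_mul (f := Complex.ofRealHom),
      Matrix.mul_nonsing_inv _ hdetU, Matrix.map_one _ (by simp) (by simp)]
  have hGc2 : Gc * (1 - Sc) = 1 := by
    rw [← hmapsub, hGcdef, green, ← Matrix.map_mul (f := Complex.ofRealHom),
      Matrix.nonsing_inv_mul _ hdetU, Matrix.map_one _ (by simp) (by simp)]
  -- fixed rhs vector
  set b0 : ↥(Bndᶜ) → ℂ := fun y => -(f y.1 - ∑ z : ↥Bnd, ((P y.1 z.1 : ℝ) : ℂ) * g z.1) with hb0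
  -- the equivalence between the interior equation and the matrix equation
  have hiff : ∀ u : X → ℂ, (∀ x ∈ Bnd, u x = g x) → ∀ x : ↥(Bndᶜ),
      (lap P u x.1 = f x.1 ↔ (1 - Sc).mulVec (fun y => u y.1) x = b0 x) := by
    intro u hbdry x
    have hsplit : ∑ y : X, (P x.1 y : ℂ) * u y =
        (∑ z : ↥Bnd, ((P x.1 z.1 : ℝ) : ℂ) * g z.1) + ∑ y : ↥(Bndᶜ), (P x.1 y.1 : ℂ) * u y.1 := by
      rw [← Finset.sum_add_sum_compl Bnd (fun y => (P x.1 y : ℂ) * u y)]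
      congr 1
      · rw [← Finset.sum_coe_sort Bnd (fun y => (P x.1 y : ℂ) * u y)]
        exact Finset.sum_congr rfl fun z _ => by rw [hbdry z.1 z.2]
      · exact (Finset.sum_coe_sort _ _).symm
    have hmv : (1 - Sc).mulVec (fun y => u y.1) x =
        u x.1 - ∑ y : ↥(Bndᶜ), (P x.1 y.1 : ℂ) * u y.1 := by
      rw [Matrix.sub_mulVec, Matrix.one_mulVec]
      simp [Matrix.mulVec, dotProduct, hScdef, subMatrix]
    rw [hmv, lap, hsplit, hb0]
    constructor <;> intro h <;> linear_combination -h
  -- any solution satisfies the formula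
  have hform : ∀ u : X → ℂ,
      ((∀ x, x ∉ Bnd → lap P u x = f x) ∧ (∀ x ∈ Bnd, u x = g x)) →
      ∀ x, ∀ hx : x ∈ Bndᶜ,
        u x = -∑ y : ↥Bndᶜ, ((green P Bndᶜ ⟨x, hx⟩ y : ℝ) : ℂ) *
          (f y.1 - ∑ z : ↥Bnd, ((P y.1 z.1 : ℝ) : ℂ) * g z.1) := by
    intro u hu x hx
    have hb : (1 - Sc).mulVec (fun y => u y.1) = b0 :=
      funext fun y => (hiff u hu.2 y).1 (hu.1 y.1 (Finset.mem_compl.1 y.2))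
    have huA : (fun y : ↥(Bndᶜ) => u y.1) = Gc.mulVec b0 := by
      calc (fun y : ↥(Bndᶜ) => u y.1)
          = (1 : Matrix ↥(Bndᶜ) ↥(Bndᶜ) ℂ).mulVec (fun y => u y.1) := (Matrix.one_mulVec _).symm
        _ = (Gc * (1 - Sc)).mulVec (fun y => u y.1) := by rw [hGc2]
        _ = Gc.mulVec ((1 - Sc).mulVec (fun y => u y.1)) := (Matrix.mulVec_mulVec _ _ _).symm
        _ = Gc.mulVec b0 := by rw [hb]
    have : u x = (Gc.mulVec b0) ⟨x, hx⟩ := congrFun huA ⟨x, hx⟩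
    rw [this]
    simp only [Matrix.mulVec, dotProduct, hGcdef, hb0, Matrix.map_apply]
    rw [← Finset.sum_neg_distrib]
    exact Finset.sum_congr rfl fun y _ => by simp only [Complex.ofRealHom_eq_coe]; ring
  -- the explicit solution
  set u0 : X → ℂ := fun x => if hx : x ∈ Bnd then g x
    else Gc.mulVec b0 ⟨x, Finset.mem_compl.2 hx⟩ with hu0def
  have hu0bdry : ∀ x ∈ Bnd, u0 x = g x := fun x hx => dif_pos hx
  have hu0A : (fun y : ↥(Bndᶜ) => u0 y.1) = Gc.mulVec b0 := by
    funext y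
    have hy : y.1 ∉ Bnd := Finset.mem_compl.1 y.2
    simp only [hu0def, dif_neg hy]
  have hu0b : (1 - Sc).mulVec (fun y => u0 y.1) = b0 := by
    rw [hu0A, Matrix.mulVec_mulVec, hGc1, Matrix.one_mulVec]
  have hu0int : ∀ x, x ∉ Bnd → lap P u0 x = f x := by
    intro x hx
    exact (hiff u0 hu0bdry ⟨x, Finset.mem_compl.2 hx⟩).2 (congrFun hu0b _)
  refine ⟨⟨u0, ⟨hu0int, hu0bdry⟩, ?_⟩, hform⟩
  intro u hu
  funext x
  by_cases hx : x ∈ Bnd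
  · rw [hu.2 x hx, hu0bdry x hx]
  · rw [hform u hu x (Finset.mem_compl.2 hx), hform u0 ⟨hu0int, hu0bdry⟩ x (Finset.mem_compl.2 hx)]
end

section
/- Let f ∈ L(X°), g ∈ L(∂X), and α, β : ∂X → ℂ. Put A = {x ∈ ∂X : β(x) ≠ 0} and B = {x ∈ ∂X : β(x) = 0}. Assume α(x) ≠ 0 for all x ∈ B, |α(x)+β(x)| ≥ |β(x)| for all x ∈ A, and additionally that either B is nonempty or |α(x)+β(x)| > |β(x)| for at least one x ∈ A. Define the matrix P̃ over X°∪A by P̃(x,y) = P(x,y) for x ∈ X° and P̃(x,y) = (β(x)/(α(x)+β(x)))·P(x,y) for x ∈ A, and similarly the (X°∪A)×B block P̃_{X°∪A,B}(x,z) = P(x,z) for x ∈ X°, = (β(x)/(α(x)+β(x)))·P(x,z) for x ∈ A; define f̃ ∈ L(X°∪A) by f̃ = f on X° and f̃(x) = −g(x)/(α(x)+β(x)) for x ∈ A. Then the (X°∪A)×(X°∪A) matrix I − P̃ is invertible, and there is a unique u ∈ L(X) satisfying Δu = f on X° and α(x)u(x) + β(x)∂_n u(x) = g(x) for all x ∈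 ∂X; it is given by u(x) = g(x)/α(x) for x ∈ B and u_{X°∪A} = −(I − P̃)^{-1}( f̃ − P̃_{X°∪A,B}·(g/α)_B ). -/
open Matrix Finset

attribute [local instance] Classical.propDecidable

/-- The part `A = {x ∈ ∂X : β(x) ≠ 0}` of the boundary. -/
noncomputable def Apart {X : Type*} (Bnd : Finset X) (β : X → ℂ) : Finset X :=
  Bnd.filter fun x => β x ≠ 0

/-- The part `B = {x ∈ ∂X : β(x) = 0}` of the boundary. -/
noncomputable def Bpart {X : Type*} (Bnd : Finset X) (β : X → ℂ) : Finset X :=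
  Bnd.filter fun x => β x = 0

/-- The modified transition matrix over `X° ∪ A` of the Robin problem. -/
noncomputable def PRobin {X : Type*} [Fintype X] [DecidableEq X] (P : Matrix X X ℝ)
    (Bnd : Finset X) (α β : X → ℂ) :
    Matrix ↥(Bndᶜ ∪ Apart Bnd β) ↥(Bndᶜ ∪ Apart Bnd β) ℂ :=
  Matrix.of fun x y =>
    (if x.1 ∈ Bnd then β x.1 / (α x.1 + β x.1) else 1) * (P x.1 y.1 : ℂ)

/-- The `(X°∪A) × B` block of the modified transition matrix of the Robin problem. -/
noncomputable def PRobinB {X : Type*} [Fintype X] [DecidableEq X] (P : Matrix X X ℝ)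
    (Bnd : Finset X) (α β : X → ℂ) :
    Matrix ↥(Bndᶜ ∪ Apart Bnd β) ↥(Bpart Bnd β) ℂ :=
  Matrix.of fun x z =>
    (if x.1 ∈ Bnd then β x.1 / (α x.1 + β x.1) else 1) * (P x.1 z.1 : ℂ)

/-!
Eliminating the Dirichlet part `B` (where the condition reads `u = g/α`) and dividing the Robin
condition on `A` by `α + β` turns the problem into the fixed-point equation
`u = P̃ u_{X°∪A} + P̃_{X°∪A,B} (g/α)_B - f̃` on `X° ∪ A`. The matrix `I − P̃` is invertible by a
maximum principle: if `v = P̃ v`, extending `v` by zero gives `‖v‖ ≤ P ‖v‖` on all of `X`, so by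
irreducibility `‖v‖` is constant; at a point of `B`, or a point of `A` with `‖β‖ < ‖α + β‖`,
this constant must vanish.
-/

namespace Matrix

variable {n : Type*} {A : Matrix n n ℝ}

theorem IsIrreducible.mem_of_forall_pos_imp (hA : A.IsIrreducible) {T : Set n}
    (hT : ∀ i j, i ∈ T → 0 < A i j → j ∈ T) {i : n} (hi : i ∈ T) (j : n) : j ∈ T := by
  let := toQuiver A
  obtain ⟨p, -⟩ := hA.connected i j
  induction p with
  | nil => exact hi
  | cons _ e ih => exact hT _ _ ih e.down

variable [Fintype n]

theorem IsIrreducible.eq_of_le_mulVec (hA : A.IsIrreducible) (hrow : ∀ i, ∑ j, A i j = 1)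
    {h : n → ℝ} (hsub : ∀ i, h i ≤ (A *ᵥ h) i) (i j : n) : h i = h j := by
  have : Nonempty n := ⟨i⟩
  obtain ⟨m, hm⟩ := Finite.exists_max h
  suffices hmax : ∀ k, h k = h m by rw [hmax i, hmax j]
  refine hA.mem_of_forall_pos_imp (T := {k | h k = h m}) (fun a b ha hab => ?_) rfl
  have ha : h a = h m := ha
  have hterms : ∀ c ∈ univ, 0 ≤ A a c * (h m - h c) :=
    fun c _ => mul_nonneg (hA.nonneg a c) (sub_nonneg.2 (hm c))
  have hsum : ∑ c, A a c * (h m - h c) = h m - (A *ᵥ h) a := by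
    simp only [mul_sub, sum_sub_distrib, ← sum_mul, hrow, one_mul, mulVec, dotProduct]
  have hzero : ∑ c, A a c * (h m - h c) = 0 :=
    le_antisymm (by linarith [hsub a]) (sum_nonneg hterms)
  rcases mul_eq_zero.1 ((sum_eq_zero_iff_of_nonneg hterms).1 hzero b (mem_univ b)) with h0 | h0
  · exact absurd h0 hab.ne'
  · exact (sub_eq_zero.1 h0).symm

theorem IsIrreducible.eq_zero_of_eq_mul_sum (hA : A.IsIrreducible) (hrow : ∀ i, ∑ j, A i j = 1)
    {c V : n → ℂ} (hc : ∀ i, ‖c i‖ ≤ 1) (hc_lt : ∃ i, ‖c i‖ < 1)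
    (hV : ∀ i, V i = c i * ∑ j, (A i j : ℂ) * V j) : V = 0 := by
  have hmean_nonneg : ∀ i, 0 ≤ (A *ᵥ fun j => ‖V j‖) i :=
    fun i => sum_nonneg fun j _ => mul_nonneg (hA.nonneg i j) (norm_nonneg _)
  have hnorm : ∀ i, ‖V i‖ ≤ ‖c i‖ * (A *ᵥ fun j => ‖V j‖) i := by
    intro i
    rw [hV i, norm_mul]
    gcongr
    refine (norm_sum_le _ _).trans_eq (sum_congr rfl fun j _ => ?_)
    rw [norm_mul, Complex.norm_real, Real.norm_of_nonneg (hA.nonneg i j)]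
  have hconst := hA.eq_of_le_mulVec hrow
    fun i => (hnorm i).trans (mul_le_of_le_one_left (hmean_nonneg i) (hc i))
  obtain ⟨i₀, hi₀⟩ := hc_lt
  have hmean : (A *ᵥ fun j => ‖V j‖) i₀ = ‖V i₀‖ := by
    simp only [mulVec, dotProduct, ← hconst i₀, ← sum_mul, hrow, one_mul]
  have hVi₀ : ‖V i₀‖ = 0 := by
    have := hnorm i₀
    rw [hmean] at this
    nlinarith [norm_nonneg (V i₀)]
  funext i
  rw [Pi.zero_apply, ← norm_eq_zero, hconst i i₀, hVi₀]

theorem mulVec_eq_iff_eq_inv_mulVec {K : Type*} [Field K] [DecidableEq n] {M : Matrix n n K}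
    (hM : IsUnit M) {v r : n → K} : M *ᵥ v = r ↔ v = M⁻¹ *ᵥ r := by
  have hdet := (isUnit_iff_isUnit_det M).1 hM
  constructor
  · rintro rfl
    rw [mulVec_mulVec, nonsing_inv_mul _ hdet, one_mulVec]
  · rintro rfl
    rw [mulVec_mulVec, mul_nonsing_inv _ hdet, one_mulVec]

end Matrix

theorem add_ne_zero_of_norm_le_norm_add {a b : ℂ} (hb : b ≠ 0) (hle : ‖b‖ ≤ ‖a + b‖) :
    a + b ≠ 0 := by
  intro h
  rw [h, norm_zero] at hle
  exact hb (norm_le_zero_iff.1 hle)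

noncomputable def robinWeight {X : Type*} [DecidableEq X] (Bnd : Finset X) (α β : X → ℂ) (x : X) :
    ℂ :=
  if x ∈ Bnd then β x / (α x + β x) else 1

noncomputable def robinSource {X : Type*} [Fintype X] [DecidableEq X] (Bnd : Finset X)
    (f g α β : X → ℂ) (x : ↥(Bndᶜ ∪ Apart Bnd β)) : ℂ :=
  if x.1 ∈ Bnd then -g x.1 / (α x.1 + β x.1) else f x.1

def IsRobinSolution {X : Type*} [Fintype X] (P : Matrix X X ℝ) (Bnd : Finset X)
    (f g α β : X → ℂ) (u : X → ℂ) : Prop :=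
  (∀ x, x ∉ Bnd → lap P u x = f x) ∧ ∀ x ∈ Bnd, α x * u x + β x * (-lap P u x) = g x

theorem robin_condition_iff_of_eq_zero {X : Type*} [Fintype X] {P : Matrix X X ℝ}
    {g α β : X → ℂ} {x : X} (hβ : β x = 0) (hα : α x ≠ 0) (u : X → ℂ) :
    α x * u x + β x * (-lap P u x) = g x ↔ u x = g x / α x := by
  rw [hβ, zero_mul, add_zero, eq_div_iff hα, mul_comm]

section Robin

variable {X : Type*} [Fintype X] [DecidableEq X] {P : Matrix X X ℝ} {Bnd : Finset X}
  {f g α β : X → ℂ} {x : X}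

local notation "𝒮" => Bndᶜ ∪ Apart Bnd β

theorem mem_robinDomain : x ∈ 𝒮 ↔ x ∉ Bnd ∨ β x ≠ 0 := by
  simp only [mem_union, mem_compl, Apart, mem_filter]
  tauto

theorem compl_robinDomain : (Bndᶜ ∪ Apart Bnd β : Finset X)ᶜ = Bpart Bnd β := by
  ext x
  simp only [mem_compl, mem_robinDomain, Bpart, mem_filter]
  tauto

theorem notMem_robinDomain : x ∉ 𝒮 ↔ x ∈ Bpart Bnd β := by
  rw [← mem_compl, compl_robinDomain]

theorem norm_robinWeight_le_one (hineq : ∀ x ∈ Bnd, β x ≠ 0 → ‖β x‖ ≤ ‖α x + β x‖)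
    (hx : x ∈ 𝒮) : ‖robinWeight Bnd α β x‖ ≤ 1 := by
  unfold robinWeight
  split_ifs with hxB
  · have hβ : β x ≠ 0 := (mem_robinDomain.1 hx).resolve_left (not_not.2 hxB)
    rw [norm_div]
    exact div_le_one_of_le₀ (hineq x hxB hβ) (norm_nonneg _)
  · exact norm_one.le

theorem PRobin_mulVec_apply (u : X → ℂ) (x : ↥𝒮) :
    (PRobin P Bnd α β *ᵥ fun y : ↥𝒮 => u y) x =
      robinWeight Bnd α β x * ∑ y ∈ 𝒮, (P x y : ℂ) * u y := by
  rw [← sum_coe_sort, mul_sum]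
  refine sum_congr rfl fun y _ => ?_
  simp only [PRobin, robinWeight, of_apply]
  ring

theorem PRobinB_mulVec_apply (u : X → ℂ) (x : ↥𝒮) :
    (PRobinB P Bnd α β *ᵥ fun z : Bpart Bnd β => u z) x =
      robinWeight Bnd α β x * ∑ z ∈ Bpart Bnd β, (P x z : ℂ) * u z := by
  rw [← sum_coe_sort, mul_sum]
  refine sum_congr rfl fun y _ => ?_
  simp only [PRobinB, robinWeight, of_apply]
  ring

theorem PRobin_mulVec_add_PRobinB_mulVec (u : X → ℂ) (x : ↥𝒮) :
    (PRobin P Bnd α β *ᵥ fun y : ↥𝒮 => u y) x +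
        (PRobinB P Bnd α β *ᵥ fun z : Bpart Bnd β => u z) x =
      robinWeight Bnd α β x * ∑ y, (P x y : ℂ) * u y := by
  rw [PRobin_mulVec_apply, PRobinB_mulVec_apply, ← mul_add, ← compl_robinDomain,
    sum_add_sum_compl]

theorem isUnit_one_sub_PRobin (hP : P.IsIrreducible) (hrow : ∀ x, ∑ y, P x y = 1)
    (hineq : ∀ x ∈ Bnd, β x ≠ 0 → ‖β x‖ ≤ ‖α x + β x‖)
    (hextra : (∃ x ∈ Bnd, β x = 0) ∨ (∃ x ∈ Bnd, β x ≠ 0 ∧ ‖β x‖ < ‖α x + β x‖)) :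
    IsUnit (1 - PRobin P Bnd α β) := by
  rw [isUnit_iff_isUnit_det, isUnit_iff_ne_zero, Ne, ← exists_mulVec_eq_zero_iff]
  rintro ⟨v, hv0, hv⟩
  apply hv0
  set V : X → ℂ := fun x => if hx : x ∈ 𝒮 then v ⟨x, hx⟩ else 0
  -- The weight `0` off `X° ∪ A` makes the extension by zero satisfy `V = c · P V` on all of `X`.
  set c : X → ℂ := fun x => if x ∈ 𝒮 then robinWeight Bnd α β x else 0
  have hc : ∀ x, ‖c x‖ ≤ 1 := by
    intro x
    by_cases hx : x ∈ 𝒮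
    · simpa only [c, if_pos hx] using norm_robinWeight_le_one hineq hx
    · simp only [c, if_neg hx, norm_zero, zero_le_one]
  have hc_lt : ∃ x, ‖c x‖ < 1 := by
    rcases hextra with ⟨x, hxB, hβ⟩ | ⟨x, hxB, hβ, hlt⟩
    · refine ⟨x, ?_⟩
      have hx : x ∉ 𝒮 := fun h => (mem_robinDomain.1 h).elim (· hxB) (· hβ)
      simp only [c, if_neg hx, norm_zero, zero_lt_one]
    · refine ⟨x, ?_⟩
      have hx : x ∈ 𝒮 := mem_robinDomain.2 (Or.inr hβ)
      simp only [c, hx, if_true, robinWeight, hxB, norm_div]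
      exact (div_lt_one (norm_pos_iff.2 hβ |>.trans hlt)).2 hlt
  have hV : ∀ x, V x = c x * ∑ y, (P x y : ℂ) * V y := by
    intro x
    by_cases hx : x ∈ 𝒮
    · have hfix : v ⟨x, hx⟩ = (PRobin P Bnd α β *ᵥ v) ⟨x, hx⟩ := by
        simpa [sub_mulVec, sub_eq_zero] using congrFun hv ⟨x, hx⟩
      have hVv : (fun y : ↥𝒮 => V y) = v := funext fun y => dif_pos y.2
      have hsum : ∑ y ∈ 𝒮, (P x y : ℂ) * V y = ∑ y, (P x y : ℂ) * V y :=
        sum_subset (subset_univ _) fun y _ hy => by simp only [V, dif_neg hy, mul_zero]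
      calc V x = v ⟨x, hx⟩ := dif_pos hx
        _ = (PRobin P Bnd α β *ᵥ fun y : ↥𝒮 => V y) ⟨x, hx⟩ := by rw [hVv, ← hfix]
        _ = c x * ∑ y, (P x y : ℂ) * V y := by
            rw [PRobin_mulVec_apply, hsum]; exact congrArg (· * _) (if_pos hx).symm
    · simp only [V, c, dif_neg hx, if_neg hx, zero_mul]
  have hV0 := hP.eq_zero_of_eq_mul_sum hrow hc hc_lt hV
  exact funext fun y => (dif_pos y.2).symm.trans (congrFun hV0 y)

theorem lap_eq_iff_of_notMem (hx : x ∉ Bnd) (u : X → ℂ) :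
    lap P u x = f x ↔ u x - robinWeight Bnd α β x * ∑ y, (P x y : ℂ) * u y = -f x := by
  rw [robinWeight, if_neg hx, one_mul, lap]
  constructor <;> intro h <;> linear_combination -h

theorem robin_condition_iff_of_add_ne_zero (hx : x ∈ Bnd) (hαβ : α x + β x ≠ 0) (u : X → ℂ) :
    α x * u x + β x * (-lap P u x) = g x ↔
      u x - robinWeight Bnd α β x * ∑ y, (P x y : ℂ) * u y = g x / (α x + β x) := by
  have hscale : (u x - β x / (α x + β x) * ∑ y, (P x y : ℂ) * u y) * (α x + β x) =
      α x * u x + β x * (-lap P u x) := by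
    rw [lap]
    field_simp
    ring
  rw [robinWeight, if_pos hx, eq_div_iff hαβ, hscale]

theorem isRobinSolution_iff (hαB : ∀ x ∈ Bnd, β x = 0 → α x ≠ 0)
    (hineq : ∀ x ∈ Bnd, β x ≠ 0 → ‖β x‖ ≤ ‖α x + β x‖) (u : X → ℂ) :
    IsRobinSolution P Bnd f g α β u ↔
      (∀ x ∈ Bpart Bnd β, u x = g x / α x) ∧
        ∀ x : ↥𝒮, u x - robinWeight Bnd α β x * ∑ y, (P x y : ℂ) * u y =
          -robinSource Bnd f g α β x := by
  have hsource : ∀ x : ↥𝒮, -robinSource Bnd f g α β x =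
      if x.1 ∈ Bnd then g x / (α x + β x) else -f x := by
    intro x
    unfold robinSource
    split_ifs <;> ring
  have hαβ : ∀ x ∈ Bnd, β x ≠ 0 → α x + β x ≠ 0 :=
    fun x hx hβ => add_ne_zero_of_norm_le_norm_add hβ (hineq x hx hβ)
  constructor
  · rintro ⟨hint, hbnd⟩
    refine ⟨fun x hx => ?_, fun x => ?_⟩
    · obtain ⟨hxB, hβ⟩ := mem_filter.1 hx
      exact (robin_condition_iff_of_eq_zero hβ (hαB x hxB hβ) u).1 (hbnd x hxB)
    · rw [hsource]
      split_ifs with hxB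
      · have hβ := (mem_robinDomain.1 x.2).resolve_left (not_not.2 hxB)
        exact (robin_condition_iff_of_add_ne_zero hxB (hαβ x hxB hβ) u).1 (hbnd x hxB)
      · exact (lap_eq_iff_of_notMem hxB u).1 (hint x hxB)
  · rintro ⟨hB, hS⟩
    refine ⟨fun x hx => (lap_eq_iff_of_notMem (α := α) (β := β) hx u).2 ?_, fun x hx => ?_⟩
    · simpa only [hsource, if_neg hx] using hS ⟨x, mem_robinDomain.2 (Or.inl hx)⟩
    · by_cases hβ : β x = 0
      · exact (robin_condition_iff_of_eq_zero hβ (hαB x hx hβ) u).2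
          (hB x (mem_filter.2 ⟨hx, hβ⟩))
      · refine (robin_condition_iff_of_add_ne_zero hx (hαβ x hx hβ) u).2 ?_
        simpa only [hsource, if_pos hx] using hS ⟨x, mem_robinDomain.2 (Or.inr hβ)⟩

theorem isRobinSolution_iff_mulVec (hαB : ∀ x ∈ Bnd, β x = 0 → α x ≠ 0)
    (hineq : ∀ x ∈ Bnd, β x ≠ 0 → ‖β x‖ ≤ ‖α x + β x‖) (u : X → ℂ) :
    IsRobinSolution P Bnd f g α β u ↔
      (∀ x ∈ Bpart Bnd β, u x = g x / α x) ∧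
        (1 - PRobin P Bnd α β) *ᵥ (fun x : ↥𝒮 => u x) =
          -(robinSource Bnd f g α β -
            PRobinB P Bnd α β *ᵥ fun z : ↥(Bpart Bnd β) => g z / α z) := by
  rw [isRobinSolution_iff hαB hineq]
  refine and_congr_right fun hB => ?_
  have huB : (fun z : ↥(Bpart Bnd β) => g z / α z) = fun z : ↥(Bpart Bnd β) => u z :=
    funext fun z => (hB z z.2).symm
  rw [huB, funext_iff]
  refine forall_congr' fun x => ?_
  rw [← PRobin_mulVec_add_PRobinB_mulVec u x, sub_mulVec, one_mulVec]
  simp only [Pi.sub_apply, Pi.neg_apply]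
  constructor <;> intro h <;> linear_combination h

end Robin

theorem robin_problem_general {X : Type*} [Fintype X] [DecidableEq X]
    (P : Matrix X X ℝ)
    (hnonneg : ∀ x y, 0 ≤ P x y)
    (hrow : ∀ x, ∑ y, P x y = 1)
    (hirr : ∀ x y, ∃ n, 1 ≤ n ∧ 0 < (P ^ n) x y)
    (Bnd : Finset X)
    (f g : X → ℂ) (α β : X → ℂ)
    (hαB : ∀ x ∈ Bnd, β x = 0 → α x ≠ 0)
    (hineq : ∀ x ∈ Bnd, β x ≠ 0 → ‖β x‖ ≤ ‖α x + β x‖)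
    (hextra : (∃ x ∈ Bnd, β x = 0) ∨
      (∃ x ∈ Bnd, β x ≠ 0 ∧ ‖β x‖ < ‖α x + β x‖)) :
    IsUnit (1 - PRobin P Bnd α β) ∧
    (∃! u : X → ℂ,
      (∀ x, x ∉ Bnd → lap P u x = f x) ∧
        (∀ x ∈ Bnd, α x * u x + β x * (-lap P u x) = g x)) ∧
    (∀ u : X → ℂ,
      ((∀ x, x ∉ Bnd → lap P u x = f x) ∧
        (∀ x ∈ Bnd, α x * u x + β x * (-lap P u x) = g x)) →
      (∀ x ∈ Bnd, β x = 0 → u x = g x / α x) ∧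
      (∀ x, ∀ hx : x ∈ Bndᶜ ∪ Apart Bnd β,
        u x = -∑ y : ↥(Bndᶜ ∪ Apart Bnd β),
          (1 - PRobin P Bnd α β)⁻¹ ⟨x, hx⟩ y *
            ((if y.1 ∈ Bnd then -g y.1 / (α y.1 + β y.1) else f y.1) -
              ∑ z : ↥(Bpart Bnd β), PRobinB P Bnd α β y z * (g z.1 / α z.1)))) := by
  have hP : P.IsIrreducible := (isIrreducible_iff_exists_pow_pos hnonneg).2 hirr
  have hM := isUnit_one_sub_PRobin hP hrow hineq hextra
  set v := (1 - PRobin P Bnd α β)⁻¹ *ᵥ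
    -(robinSource Bnd f g α β - PRobinB P Bnd α β *ᵥ fun z : ↥(Bpart Bnd β) => g z / α z) with hv
  have hsol : ∀ u, IsRobinSolution P Bnd f g α β u ↔
      (∀ x ∈ Bpart Bnd β, u x = g x / α x) ∧ (fun x : ↥(Bndᶜ ∪ Apart Bnd β) => u x) = v :=
    fun u => by rw [isRobinSolution_iff_mulVec hαB hineq, mulVec_eq_iff_eq_inv_mulVec hM]
  refine ⟨hM, ⟨fun x => if hx : x ∈ Bndᶜ ∪ Apart Bnd β then v ⟨x, hx⟩ else g x / α x,
    (hsol _).2 ⟨fun x hx => dif_neg (notMem_robinDomain.2 hx), funext fun x => dif_pos x.2⟩,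
    fun u hu => ?_⟩, fun u hu => ?_⟩ <;> obtain ⟨hB, hS⟩ := (hsol u).1 hu
  · funext x
    split_ifs with hx
    · exact congrFun hS ⟨x, hx⟩
    · exact hB x (notMem_robinDomain.1 hx)
  · refine ⟨fun x hx hβ => hB x (mem_filter.2 ⟨hx, hβ⟩), fun x hx => ?_⟩
    rw [show u x = v ⟨x, hx⟩ from congrFun hS ⟨x, hx⟩, hv, mulVec_neg]
    rfl

/-- Solution of the Robin boundary problem `Δu = f` on `X°`,
`α·u + β·∂ₙu = g` on `∂X`. -/
theorem robin_problem {X : Type*} [Fintype X] [DecidableEq X]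
    (P : Matrix X X ℝ)
    (hcard : 1 < Fintype.card X)
    (hnonneg : ∀ x y, 0 ≤ P x y)
    (hrow : ∀ x, ∑ y, P x y = 1)
    (hirr : ∀ x y, ∃ n, 1 ≤ n ∧ 0 < (P ^ n) x y)
    (Bnd : Finset X) (hB : Bnd.Nonempty) (hB' : Bnd ≠ Finset.univ)
    (f g : X → ℂ) (α β : X → ℂ)
    (hαB : ∀ x ∈ Bnd, β x = 0 → α x ≠ 0)
    (hineq : ∀ x ∈ Bnd, β x ≠ 0 → ‖β x‖ ≤ ‖α x + β x‖)
    (hextra : (∃ x ∈ Bnd, β x = 0) ∨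
      (∃ x ∈ Bnd, β x ≠ 0 ∧ ‖β x‖ < ‖α x + β x‖)) :
    IsUnit (1 - PRobin P Bnd α β) ∧
    (∃! u : X → ℂ,
      (∀ x, x ∉ Bnd → lap P u x = f x) ∧
        (∀ x ∈ Bnd, α x * u x + β x * (-lap P u x) = g x)) ∧
    (∀ u : X → ℂ,
      ((∀ x, x ∉ Bnd → lap P u x = f x) ∧
        (∀ x ∈ Bnd, α x * u x + β x * (-lap P u x) = g x)) →
      (∀ x ∈ Bnd, β x = 0 → u x = g x / α x) ∧
      (∀ x, ∀ hx : x ∈ Bndᶜ ∪ Apart Bnd β,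
        u x = -∑ y : ↥(Bndᶜ ∪ Apart Bnd β),
          (1 - PRobin P Bnd α β)⁻¹ ⟨x, hx⟩ y *
            ((if y.1 ∈ Bnd then -g y.1 / (α y.1 + β y.1) else f y.1) -
              ∑ z : ↥(Bpart Bnd β), PRobinB P Bnd α β y z * (g z.1 / α z.1)))) :=
  robin_problem_general P hnonneg hrow hirr Bnd f g α β hαB hineq hextra
end

section
/- Let Π_{X°} and Π_{∂X} be the diagonal matrices with diagonal entries π(x) for x ∈ X° resp. x ∈ ∂X, let Υ = G_{X°} P_{X°,∂X}, let P̂ be defined by P̂(x,y) = π(y)P(y,x)/π(x), Ĝ_{X°} = (I_{X°} − P̂_{X°})^{-1} (which exists), and Υ̂ = Ĝ_{X°} P̂_{X°,∂X}. Then Π_{∂X} R = Υ̂ᵀ Π_{X°} Υ, where R = P_{∂X,X°} G_{X°}² P_{X°,∂X}. Moreover, if P is reversible with respect to π, i.e. π(x)P(x,y) = π(y)P(y,x) for all x,y ∈ X, then the matrix I_{∂X} + R is invertible. -/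
open Matrix Finset

/-- The `A × B` block of `P`. -/
def subMatrix2 {X : Type*} (P : Matrix X X ℝ) (A B : Finset X) : Matrix A B ℝ :=
  Matrix.of fun x y => P x.1 y.1

/-- The time-reversed transition matrix `P̂(x,y) = π(y)P(y,x)/π(x)`. -/
noncomputable def Phat {X : Type*} (P : Matrix X X ℝ) (π : X → ℝ) : Matrix X X ℝ :=
  Matrix.of fun x y => π y * P y x / π x

/-- `Π_{∂X} R = Υ̂ᵀ Π_{X°} Υ`, where `Υ = G_{X°}P_{X°,∂X}`,
`Υ̂ = Ĝ_{X°}P̂_{X°,∂X}` and `R = P_{∂X,X°} G_{X°}² P_{X°,∂X}`; moreover if `P` is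
reversible w.r.t. `π` then `I_{∂X} + R` is invertible. -/
theorem R_identity_and_reversible_invertibility {X : Type*} [Fintype X] [DecidableEq X]
    (P : Matrix X X ℝ)
    (hcard : 1 < Fintype.card X)
    (hnonneg : ∀ x y, 0 ≤ P x y)
    (hrow : ∀ x, ∑ y, P x y = 1)
    (hirr : ∀ x y, ∃ n, 1 ≤ n ∧ 0 < (P ^ n) x y)
    (π : X → ℝ)
    (hπstat : ∀ y, ∑ x, π x * P x y = π y)
    (hπpos : ∀ x, 0 < π x) (hπsum : ∑ x, π x = 1)
    (Bnd : Finset X) (hB : Bnd.Nonempty) (hB' : Bnd ≠ Finset.univ) :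
    (Matrix.diagonal (fun x : ↥Bnd => π x.1) *
        (subMatrix2 P Bnd Bndᶜ * (green P Bndᶜ) ^ 2 * subMatrix2 P Bndᶜ Bnd) =
      ((1 - subMatrix (Phat P π) Bndᶜ)⁻¹ * subMatrix2 (Phat P π) Bndᶜ Bnd)ᵀ *
        Matrix.diagonal (fun x : ↥Bndᶜ => π x.1) *
        (green P Bndᶜ * subMatrix2 P Bndᶜ Bnd)) ∧
    ((∀ x y, π x * P x y = π y * P y x) →
      IsUnit (1 + subMatrix2 P Bnd Bndᶜ * (green P Bndᶜ) ^ 2 * subMatrix2 P Bndᶜ Bnd)) := by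
  have hπne : ∀ x : X, π x ≠ 0 := fun x => (hπpos x).ne'
  -- notation
  set D : Matrix ↥Bndᶜ ↥Bndᶜ ℝ := Matrix.diagonal (fun x : ↥Bndᶜ => π x.1) with hDdef
  set E : Matrix ↥Bnd ↥Bnd ℝ := Matrix.diagonal (fun x : ↥Bnd => π x.1) with hEdef
  set Dinv : Matrix ↥Bndᶜ ↥Bndᶜ ℝ := Matrix.diagonal (fun x : ↥Bndᶜ => (π x.1)⁻¹)
    with hDinvdef
  have hDDinv : D * Dinv = 1 := by
    rw [hDdef, hDinvdef, Matrix.diagonal_mul_diagonal]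
    simp [mul_inv_cancel₀, hπne]
  have hDinvD : Dinv * D = 1 := by
    rw [hDdef, hDinvdef, Matrix.diagonal_mul_diagonal]
    simp [inv_mul_cancel₀, hπne]
  have hDinv_eq : D⁻¹ = Dinv := Matrix.inv_eq_right_inv hDDinv
  have hDinvinv : Dinv⁻¹ = D := Matrix.inv_eq_right_inv hDinvD
  -- block identities for the reversed chain
  have hPhatA : subMatrix (Phat P π) Bndᶜ = Dinv * (subMatrix P Bndᶜ)ᵀ * D := by
    ext i j
    simp only [hDdef, hDinvdef, Matrix.mul_diagonal, Matrix.diagonal_mul, subMatrix, Phat,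
      Matrix.of_apply, Matrix.transpose_apply]
    field_simp
  have hPhatAB : subMatrix2 (Phat P π) Bndᶜ Bnd = Dinv * (subMatrix2 P Bnd Bndᶜ)ᵀ * E := by
    ext i j
    simp only [hEdef, hDinvdef, Matrix.mul_diagonal, Matrix.diagonal_mul, subMatrix2, Phat,
      Matrix.of_apply, Matrix.transpose_apply]
    field_simp
  have hIsub : 1 - subMatrix (Phat P π) Bndᶜ = Dinv * (1 - subMatrix P Bndᶜ)ᵀ * D := by
    rw [hPhatA, Matrix.transpose_sub, Matrix.transpose_one, Matrix.mul_sub, Matrix.mul_one,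
      Matrix.sub_mul, hDinvD]
  have hGhat : (1 - subMatrix (Phat P π) Bndᶜ)⁻¹ = Dinv * (green P Bndᶜ)ᵀ * D := by
    rw [hIsub, Matrix.mul_inv_rev, Matrix.mul_inv_rev, hDinv_eq, hDinvinv,
      ← Matrix.transpose_nonsing_inv]
    rw [Matrix.mul_assoc]
    rfl
  -- cancellation helpers
  have hDcanc : ∀ (M : Matrix ↥Bndᶜ ↥Bnd ℝ), D * (Dinv * M) = M := fun M => by
    rw [← Matrix.mul_assoc, hDDinv, Matrix.one_mul]
  have hDcanc' : ∀ (M : Matrix ↥Bndᶜ ↥Bnd ℝ), Dinv * (D * M) = M := fun M => by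
    rw [← Matrix.mul_assoc, hDinvD, Matrix.one_mul]
  have hYhat : (1 - subMatrix (Phat P π) Bndᶜ)⁻¹ * subMatrix2 (Phat P π) Bndᶜ Bnd
      = Dinv * ((green P Bndᶜ)ᵀ * ((subMatrix2 P Bnd Bndᶜ)ᵀ * E)) := by
    rw [hGhat, hPhatAB]
    simp only [Matrix.mul_assoc]
    rw [hDcanc]
  have key : E * (subMatrix2 P Bnd Bndᶜ * (green P Bndᶜ) ^ 2 * subMatrix2 P Bndᶜ Bnd)
      = ((1 - subMatrix (Phat P π) Bndᶜ)⁻¹ * subMatrix2 (Phat P π) Bndᶜ Bnd)ᵀ *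
        D * (green P Bndᶜ * subMatrix2 P Bndᶜ Bnd) := by
    rw [hYhat]
    simp only [Matrix.transpose_mul, Matrix.transpose_transpose, hDinvdef, hEdef, hDdef,
      Matrix.diagonal_transpose, pow_two, Matrix.mul_assoc]
    rw [← hDinvdef, ← hEdef, ← hDdef, hDcanc']
  refine ⟨key, fun hrev => ?_⟩
  -- reversibility: Phat = P
  have hPhat_eq : Phat P π = P := by
    ext x y
    simp only [Phat, Matrix.of_apply]
    rw [hrev y x]
    exact mul_div_cancel_left₀ _ (hπne x)
  set R : Matrix ↥Bnd ↥Bnd ℝ :=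
    subMatrix2 P Bnd Bndᶜ * (green P Bndᶜ) ^ 2 * subMatrix2 P Bndᶜ Bnd with hRdef
  set Υ : Matrix ↥Bndᶜ ↥Bnd ℝ := green P Bndᶜ * subMatrix2 P Bndᶜ Bnd with hYdef
  have h1 : E * R = Υᵀ * D * Υ := by
    rw [key, hPhat_eq]
    rfl
  have hN : E * (1 + R) = E + Υᵀ * D * Υ := by
    rw [Matrix.mul_add, Matrix.mul_one, h1]
  -- positive definiteness of E + ΥᵀDΥ : trivial kernel
  have hker : ¬ ∃ v ≠ 0, (E + Υᵀ * D * Υ) *ᵥ v = 0 := by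
    rintro ⟨v, hv, hv0⟩
    have hdot : v ⬝ᵥ ((E + Υᵀ * D * Υ) *ᵥ v) = 0 := by rw [hv0, dotProduct_zero]
    set w : ↥Bndᶜ → ℝ := Υ *ᵥ v with hwdef
    have hsplit : v ⬝ᵥ ((E + Υᵀ * D * Υ) *ᵥ v)
        = (∑ b, π b.1 * v b ^ 2) + ∑ a, π a.1 * w a ^ 2 := by
      rw [Matrix.add_mulVec, dotProduct_add]
      congr 1
      · simp only [hEdef, dotProduct, Matrix.mulVec_diagonal]
        exact Finset.sum_congr rfl fun b _ => by ring
      · rw [← Matrix.mulVec_mulVec, ← Matrix.mulVec_mulVec, Matrix.dotProduct_mulVec,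
          Matrix.vecMul_transpose, ← hwdef]
        simp only [hDdef, dotProduct, Matrix.mulVec_diagonal]
        exact Finset.sum_congr rfl fun a _ => by ring
    have hsum0 : (∑ b, π b.1 * v b ^ 2) + ∑ a, π a.1 * w a ^ 2 = 0 := by
      rw [← hsplit, hdot]
    have h1nn : (0:ℝ) ≤ ∑ b, π b.1 * v b ^ 2 :=
      Finset.sum_nonneg fun b _ => mul_nonneg (hπpos b.1).le (sq_nonneg _)
    have h2nn : (0:ℝ) ≤ ∑ a, π a.1 * w a ^ 2 :=
      Finset.sum_nonneg fun a _ => mul_nonneg (hπpos a.1).le (sq_nonneg _)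
    have h1z : (∑ b, π b.1 * v b ^ 2) = 0 := le_antisymm (by linarith) h1nn
    have hvz : v = 0 := by
      funext b
      have := (Finset.sum_eq_zero_iff_of_nonneg
        (fun b _ => mul_nonneg (hπpos (b:↥Bnd).1).le (sq_nonneg (v b)))).1 h1z b (Finset.mem_univ b)
      have hb2 : v b ^ 2 = 0 := by
        rcases mul_eq_zero.1 this with h | h
        · exact absurd h (hπne b.1)
        · exact h
      exact pow_eq_zero_iff (n := 2) (by norm_num) |>.1 hb2
    exact hv hvz
  have hdetN : (E + Υᵀ * D * Υ).det ≠ 0 := fun hd =>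
    hker (Matrix.exists_mulVec_eq_zero_iff.2 hd)
  have hdetE : E.det ≠ 0 := by
    rw [hEdef, Matrix.det_diagonal]
    exact (Finset.prod_pos fun b _ => hπpos b.1).ne'
  have hdet : (1 + R).det ≠ 0 := by
    intro h
    apply hdetN
    rw [← hN, Matrix.det_mul, h, mul_zero]
  exact (Matrix.isUnit_iff_isUnit_det _).2 (isUnit_iff_ne_zero.2 hdet)
end
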